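/- arXiv:math/0504488 — 5 statements merged into one kernel-verified Lean document; each statement's English description precedes it below -/
import Mathlib

section
/- Let a_1 > a_2 > a_3 > ... > a_r and b_1 < ... < b_r be real numbers with a_1 > b_r, a_2 > b_r, a_i < b_r for i ≥ 3, and a_i > b_j for all i ≤ r and j ≤ r-1. Define f(x) = ∏_{j=1}^{r-1}(x - b_j) / ((x - b_r) ∏_{i=3}^{r}(x - a_i)). Then f(a_1) < f(a_2). -/
open Finset

private lemma key_le {a0 a1 s t : ℝ} (h01 : a1 < a0) (hs : s < a1) (ht : t < a1) (hst : s ≤ t) :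
    a0 - s ≤ (a0 - t) / (a1 - t) * (a1 - s) := by
  rw [div_mul_eq_mul_div, le_div_iff₀ (by linarith)]
  nlinarith [mul_nonneg (sub_nonneg.2 hst) (le_of_lt (sub_pos.2 h01))]

private lemma key_lt {a0 a1 t p : ℝ} (h01 : a1 < a0) (ht : t < a1) (hp : p < a1) (htp : t < p) :
    (a0 - t) / (a1 - t) * (a1 - p) < a0 - p := by
  rw [div_mul_eq_mul_div, div_lt_iff₀ (by linarith)]
  nlinarith [mul_pos (sub_pos.2 htp) (sub_pos.2 h01)]

open Finset in
/-- Key lemma for Class IV: with `f(x) = ∏_{j<r}(x-b_j)/((x-b_r)∏_{i≥3}(x-a_i))`,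
one has `f(a₁) < f(a₂)`. -/
theorem stmt_7 (n : ℕ) (a b : Fin (n + 2) → ℝ)
    (ha : StrictAnti a) (hb : StrictMono b)
    (h1 : a 0 > b (Fin.last (n + 1))) (h2 : a 1 > b (Fin.last (n + 1)))
    (h3 : ∀ i : Fin (n + 2), 2 ≤ i.val → a i < b (Fin.last (n + 1)))
    (h4 : ∀ i j : Fin (n + 2), j ≠ Fin.last (n + 1) → a i > b j) :
    (fun x : ℝ =>
        (∏ j ∈ univ.filter (fun j : Fin (n + 2) => j ≠ Fin.last (n + 1)), (x - b j)) /
        ((x - b (Fin.last (n + 1))) *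
          ∏ i ∈ univ.filter (fun i : Fin (n + 2) => 2 ≤ i.val), (x - a i))) (a 0)
    < (fun x : ℝ =>
        (∏ j ∈ univ.filter (fun j : Fin (n + 2) => j ≠ Fin.last (n + 1)), (x - b j)) /
        ((x - b (Fin.last (n + 1))) *
          ∏ i ∈ univ.filter (fun i : Fin (n + 2) => 2 ≤ i.val), (x - a i))) (a 1) := by
  simp only
  set L : Fin (n + 2) := Fin.last (n + 1) with hL
  set S : Finset (Fin (n + 2)) := univ.filter (fun j => j ≠ L) with hS
  set T : Finset (Fin (n + 2)) := univ.filter (fun i => 2 ≤ i.val) with hT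
  have hβmem : (n : ℕ) < n + 2 := by omega
  set β : Fin (n + 2) := ⟨n, hβmem⟩ with hβ
  have hβne : β ≠ L := by simp [hβ, hL, Fin.ext_iff]
  have h01 : a 1 < a 0 := ha (by simp [Fin.lt_def])
  have ha1β : b β < a 1 := h4 1 β hβne
  set c : ℝ := (a 0 - b β) / (a 1 - b β) with hc
  have hcpos : 0 < c := div_pos (by linarith) (by linarith)
  -- cardinalities
  have hScard : S.card = n + 1 := by
    rw [hS, filter_ne' univ L, card_erase_of_mem (mem_univ _), card_univ]
    simp
  have hTcard : T.card = n := by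
    have hneg : (univ.filter (fun i : Fin (n + 2) => ¬ 2 ≤ i.val)) = {0, 1} := by
      ext i
      simp only [mem_filter, mem_univ, true_and, not_le, mem_insert, mem_singleton,
        Fin.ext_iff, Fin.val_zero, Fin.val_one]
      omega
    have := card_filter_add_card_filter_not (s := (univ : Finset (Fin (n + 2))))
      (p := fun i => 2 ≤ i.val)
    rw [hneg, ← hT] at this
    simp only [card_univ, Fintype.card_fin] at this
    have h01' : ({0, 1} : Finset (Fin (n + 2))).card = 2 := by
      rw [card_insert_of_notMem (by simp [Fin.ext_iff]), card_singleton]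
    omega
  -- facts about zeros
  have hbS : ∀ j ∈ S, b j < a 1 ∧ b j < a 0 ∧ b j ≤ b β := by
    intro j hj
    rw [hS, mem_filter] at hj
    have hjne := hj.2
    refine ⟨h4 1 j hjne, h4 0 j hjne, ?_⟩
    have : j ≤ β := by
      have hjlt := j.isLt
      have hjv : j.val ≠ n + 1 := by
        intro h; exact hjne (by simp [hL, Fin.ext_iff, h])
      simp only [hβ, Fin.le_def]
      omega
    exact hb.monotone this
  -- facts about poles in T
  have haT : ∀ i ∈ T, a i < a 1 ∧ b β < a i ∧ a i < a 0 := by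
    intro i hi
    rw [hT, mem_filter] at hi
    have h1i : (1 : Fin (n + 2)) < i := by
      rw [Fin.lt_def]
      simp only [Fin.val_one]
      omega
    exact ⟨ha h1i, h4 i β hβne, lt_trans (ha h1i) h01⟩
  have hβL : b β < b L := hb (by rw [hβ, hL, Fin.lt_def]; simp)
  -- products positivity
  have hP1pos : 0 < ∏ j ∈ S, (a 1 - b j) :=
    prod_pos fun j hj => sub_pos.2 (hbS j hj).1
  have hQ1pos : 0 < (a 1 - b L) * ∏ i ∈ T, (a 1 - a i) :=
    mul_pos (sub_pos.2 h2) (prod_pos fun i hi => sub_pos.2 (haT i hi).1)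
  have hQ0pos : 0 < (a 0 - b L) * ∏ i ∈ T, (a 0 - a i) :=
    mul_pos (sub_pos.2 h1) (prod_pos fun i hi => sub_pos.2 (haT i hi).2.2)
  -- numerator bound
  have hP : ∏ j ∈ S, (a 0 - b j) ≤ c ^ (n + 1) * ∏ j ∈ S, (a 1 - b j) := by
    calc ∏ j ∈ S, (a 0 - b j) ≤ ∏ j ∈ S, (c * (a 1 - b j)) := by
          apply prod_le_prod
          · intro j hj; have := (hbS j hj).2.1; linarith
          · intro j hj
            obtain ⟨hj1, _, hjβ⟩ := hbS j hj
            exact key_le h01 hj1 ha1β hjβ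
      _ = c ^ (n + 1) * ∏ j ∈ S, (a 1 - b j) := by
          rw [prod_mul_distrib, prod_const, hScard]
  -- denominator bound
  have hQ : c ^ (n + 1) * ((a 1 - b L) * ∏ i ∈ T, (a 1 - a i))
      < (a 0 - b L) * ∏ i ∈ T, (a 0 - a i) := by
    have hrw : c ^ (n + 1) * ((a 1 - b L) * ∏ i ∈ T, (a 1 - a i))
        = (c * (a 1 - b L)) * ∏ i ∈ T, (c * (a 1 - a i)) := by
      rw [prod_mul_distrib, prod_const, hTcard]
      ring
    rw [hrw]
    have hprodpos : 0 < ∏ i ∈ T, (c * (a 1 - a i)) :=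
      prod_pos fun i hi => mul_pos hcpos (sub_pos.2 (haT i hi).1)
    apply mul_lt_mul (key_lt h01 ha1β h2 hβL)
    · apply prod_le_prod
      · intro i hi; exact le_of_lt (mul_pos hcpos (sub_pos.2 (haT i hi).1))
      · intro i hi
        obtain ⟨hi1, hiβ, _⟩ := haT i hi
        exact le_of_lt (key_lt h01 ha1β hi1 hiβ)
    · exact hprodpos
    · linarith
  -- conclude
  rw [div_lt_div_iff₀ hQ0pos hQ1pos]
  calc (∏ j ∈ S, (a 0 - b j)) * ((a 1 - b L) * ∏ i ∈ T, (a 1 - a i))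
      ≤ (c ^ (n + 1) * ∏ j ∈ S, (a 1 - b j)) * ((a 1 - b L) * ∏ i ∈ T, (a 1 - a i)) :=
        mul_le_mul_of_nonneg_right hP (le_of_lt hQ1pos)
    _ = (∏ j ∈ S, (a 1 - b j)) * (c ^ (n + 1) * ((a 1 - b L) * ∏ i ∈ T, (a 1 - a i))) := by
        ring
    _ < (∏ j ∈ S, (a 1 - b j)) * ((a 0 - b L) * ∏ i ∈ T, (a 0 - a i)) :=
        mul_lt_mul_of_pos_left hQ hP1pos
end

section
/- Let a_1 > ... > a_r and b_1 < ... < b_r be real numbers with a_i > b_j for all 1 ≤ i ≤ r, 1 ≤ j ≤ r-1; a_1 > b_r and a_2 > b_r; and a_i < b_r for all i ≥ 3. Define the r×r matrix C by C_{ij} = 1/(a_i - b_j) if a_i > b_j and 0 otherwise. Then (-1)^{r+1} det(C) < 0; in particular det(C) ≠ 0. -/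
/-! Expanding along the last column, whose only nonzero entries are `(a 0 - β)⁻¹` and
`(a 1 - β)⁻¹` with `β = b (last)`, gives `det C = ± (M (a 1) / (a 0 - β) - M (a 0) / (a 1 - β))`,
where `M x` is the Cauchy determinant with rows `x, a 2, a 3, …` and columns `b 0, …, b n`.
One step of Gaussian elimination shows `M x = R * ∏ᵢ (x - a (i + 2)) / ∏ⱼ (x - b j)` with
`R > 0` independent of `x`. The sign is therefore decided by `f (a 1) < f (a 0)` for
`f x = (x - β) ∏ᵢ (x - a (i + 2)) / ∏ⱼ (x - b j) = ∏ⱼ (x - c j) / (x - b j)`, where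
`c = (β, a 2, a 3, …)` dominates `b` entrywise: each factor `1 - (c j - b j) / (x - b j)` is
positive and increasing for `x > c j`. -/

open Matrix Finset

section Field

variable {K : Type*} [Field K]

def cauchyMatrix {ι κ : Type*} (a : ι → K) (b : κ → K) : Matrix ι κ K :=
  of fun i j => (a i - b j)⁻¹

theorem det_cauchyMatrix_cons {k : ℕ} (x : K) (a : Fin k → K) (b : Fin (k + 1) → K)
    (hx : ∀ j, x ≠ b j) (ha : ∀ i j, a i ≠ b j) :
    (cauchyMatrix (Fin.cons x a) b).det =
      (∏ i, (x - a i)) / (∏ j, (x - b j)) *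
        ((∏ j : Fin k, (b j.succ - b 0)) / (∏ i, (a i - b 0)) *
          (cauchyMatrix a (Fin.tail b)).det) := by
  set C := cauchyMatrix (Fin.cons x a) b
  have hx' : ∀ j, x - b j ≠ 0 := fun j => sub_ne_zero.mpr (hx j)
  have ha' : ∀ i j, a i - b j ≠ 0 := fun i j => sub_ne_zero.mpr (ha i j)
  -- Clear the first column below the pivot `C 0 0 = (x - b 0)⁻¹`; what remains is a rescaled
  -- Cauchy matrix (its Schur complement).
  let c : Fin (k + 1) → K := Fin.cons 0 fun i => (x - b 0) / (a i - b 0)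
  let B : Matrix (Fin (k + 1)) (Fin (k + 1)) K := of fun i j => C i j - c i * C 0 j
  have hCB : C.det = B.det :=
    det_eq_of_forall_row_eq_smul_add_const c 0 rfl fun i j => by simp [B, c]
  have hB : B.det = (x - b 0)⁻¹ * (B.submatrix Fin.succ Fin.succ).det := by
    have hcol : ∀ i : Fin k, B i.succ 0 = 0 := fun i => by
      simp only [B, C, c, cauchyMatrix, of_apply, Fin.cons_zero, Fin.cons_succ]
      field_simp [ha' i 0, hx' 0]
      ring
    have hpivot : B 0 0 = (x - b 0)⁻¹ := by simp [B, c, C, cauchyMatrix]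
    rw [det_succ_column_zero, Fin.sum_univ_succ,
      sum_eq_zero fun i _ => by rw [hcol i, mul_zero, zero_mul], add_zero, hpivot,
      Fin.succAbove_zero, Fin.val_zero, pow_zero, one_mul]
  have hSchur : B.submatrix Fin.succ Fin.succ =
      of fun i j => (x - a i) / (a i - b 0) *
        (of fun i j => (b j.succ - b 0) / (x - b j.succ) * cauchyMatrix a (Fin.tail b) i j) i j := by
    ext i j
    simp only [B, C, c, cauchyMatrix, of_apply, submatrix_apply, Fin.cons_zero, Fin.cons_succ,
      Fin.tail]
    field_simp [ha' i 0, hx' j.succ, ha' i j.succ]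
    ring
  rw [hCB, hB, hSchur, det_mul_column, det_mul_row, prod_div_distrib, prod_div_distrib,
    Fin.prod_univ_succ (fun j => x - b j)]
  field_simp

end Field

theorem det_succ_column_of_apply_succ_succ_eq_zero {R : Type*} [CommRing R] {n : ℕ}
    (A : Matrix (Fin (n + 2)) (Fin (n + 2)) R) (j : Fin (n + 2))
    (hA : ∀ i : Fin n, A i.succ.succ j = 0) :
    A.det = (-1) ^ (j : ℕ) * (A 0 j * (A.submatrix Fin.succ j.succAbove).det -
      A 1 j * (A.submatrix (1 : Fin (n + 2)).succAbove j.succAbove).det) := by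
  rw [det_succ_column A j, Fin.sum_univ_succ, Fin.sum_univ_succ,
    sum_eq_zero fun i _ => by rw [hA i, mul_zero, zero_mul], add_zero, Fin.succAbove_zero,
    Fin.succ_zero_eq_one, Fin.val_zero, Fin.val_one, pow_add, pow_add]
  ring

section LinearOrder

variable {K : Type*} [Field K] [LinearOrder K]

def restrictedCauchyMatrix {ι κ : Type*} (a : ι → K) (b : κ → K) : Matrix ι κ K :=
  of fun i j => if b j < a i then 1 / (a i - b j) else 0

theorem det_restrictedCauchyMatrix_eq {n : ℕ} (a b : Fin (n + 2) → K)
    (hab : ∀ i j, j ≠ Fin.last (n + 1) → b j < a i)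
    (h0 : b (Fin.last (n + 1)) < a 0) (h1 : b (Fin.last (n + 1)) < a 1)
    (hlast : ∀ i : Fin n, a i.succ.succ ≤ b (Fin.last (n + 1))) :
    (restrictedCauchyMatrix a b).det = (-1) ^ (n + 1) *
      ((a 0 - b (Fin.last (n + 1)))⁻¹ *
          (cauchyMatrix (Fin.cons (a 1) fun i => a i.succ.succ) fun j => b j.castSucc).det -
        (a 1 - b (Fin.last (n + 1)))⁻¹ *
          (cauchyMatrix (Fin.cons (a 0) fun i => a i.succ.succ) fun j => b j.castSucc).det) := by
  set C := restrictedCauchyMatrix a b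
  have hminor : ∀ r : Fin (n + 1) → Fin (n + 2),
      C.submatrix r (Fin.last (n + 1)).succAbove = cauchyMatrix (a ∘ r) fun j => b j.castSucc := by
    intro r
    ext i j
    simp [C, restrictedCauchyMatrix, cauchyMatrix, hab (r i) _ (Fin.castSucc_lt_last j).ne]
  have hrow0 : a ∘ Fin.succ = Fin.cons (a 1) fun i => a i.succ.succ := by
    ext i; cases i using Fin.cases <;> rfl
  have hrow1 : a ∘ (1 : Fin (n + 2)).succAbove = Fin.cons (a 0) fun i => a i.succ.succ := by
    ext i; cases i using Fin.cases <;> simp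
  have hC0 : C 0 (Fin.last (n + 1)) = (a 0 - b (Fin.last (n + 1)))⁻¹ := by
    rw [← one_div]; exact if_pos h0
  have hC1 : C 1 (Fin.last (n + 1)) = (a 1 - b (Fin.last (n + 1)))⁻¹ := by
    rw [← one_div]; exact if_pos h1
  rw [det_succ_column_of_apply_succ_succ_eq_zero C _ fun i => if_neg (hlast i).not_gt, hminor,
    hminor, hrow0, hrow1, hC0, hC1, Fin.val_last]

variable [IsStrictOrderedRing K]

theorem det_cauchyMatrix_pos {k : ℕ} (a b : Fin k → K) (ha : StrictAnti a) (hb : StrictMono b)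
    (hab : ∀ i j, b j < a i) : 0 < (cauchyMatrix a b).det := by
  induction k with
  | zero => simp
  | succ k ih =>
    rw [← Fin.cons_self_tail a, det_cauchyMatrix_cons (a 0) (Fin.tail a) b
      (fun j => (hab 0 j).ne') fun i j => (hab i.succ j).ne']
    have ha0 : ∀ i : Fin k, a i.succ < a 0 := fun i => ha (Fin.succ_pos i)
    have hb0 : ∀ j : Fin k, b 0 < b j.succ := fun j => hb (Fin.succ_pos j)
    refine mul_pos (div_pos (prod_pos fun i _ => sub_pos.mpr (ha0 i))
      (prod_pos fun j _ => sub_pos.mpr (hab 0 j))) (mul_pos (div_pos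
      (prod_pos fun j _ => sub_pos.mpr (hb0 j)) (prod_pos fun i _ => sub_pos.mpr (hab i.succ 0)))
      (ih (Fin.tail a) (Fin.tail b) (ha.comp_strictMono Fin.strictMono_succ)
        (hb.comp Fin.strictMono_succ) fun i j => hab _ _))

theorem exists_det_cauchyMatrix_cons_eq {k : ℕ} (a : Fin k → K) (b : Fin (k + 1) → K)
    (ha : StrictAnti a) (hb : StrictMono b) (hab : ∀ i j, b j < a i) :
    ∃ R > 0, ∀ x, (∀ j, b j < x) →
      (cauchyMatrix (Fin.cons x a) b).det = (∏ i, (x - a i)) / (∏ j, (x - b j)) * R := by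
  refine ⟨(∏ j : Fin k, (b j.succ - b 0)) / (∏ i, (a i - b 0)) * (cauchyMatrix a (Fin.tail b)).det,
    mul_pos (div_pos (prod_pos fun j _ => sub_pos.mpr (hb (Fin.succ_pos j)))
    (prod_pos fun i _ => sub_pos.mpr (hab i 0))) (det_cauchyMatrix_pos a (Fin.tail b) ha
    (hb.comp Fin.strictMono_succ) fun i j => hab _ _), fun x hx => ?_⟩
  exact det_cauchyMatrix_cons x a b (fun j => (hx j).ne') fun i j => (hab i j).ne'

theorem prod_sub_div_sub_lt_prod_sub_div_sub {ι : Type*} [Fintype ι] [Nonempty ι]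
    {b c : ι → K} {x y : K} (hbc : ∀ i, b i < c i) (hcx : ∀ i, c i < x) (hxy : x < y) :
    ∏ i, (x - c i) / (x - b i) < ∏ i, (y - c i) / (y - b i) := by
  refine prod_lt_prod_of_nonempty (fun i _ => div_pos (sub_pos.mpr (hcx i))
    (by linarith [hbc i, hcx i])) (fun i _ => ?_) univ_nonempty
  have hxb : 0 < x - b i := by linarith [hbc i, hcx i]
  rw [div_lt_div_iff₀ hxb (by linarith)]
  nlinarith [hbc i]

theorem prod_sub_div_prod_sub_mul_sub_lt {k : ℕ} {a : Fin k → K} {b : Fin (k + 1) → K} {z x y : K}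
    (hb : ∀ j, b j < (Fin.cons z a : Fin (k + 1) → K) j)
    (hx : ∀ j, (Fin.cons z a : Fin (k + 1) → K) j < x) (hxy : x < y) :
    (∏ i, (x - a i)) / (∏ j, (x - b j)) * (x - z) <
      (∏ i, (y - a i)) / (∏ j, (y - b j)) * (y - z) := by
  have hprod : ∀ t, (∏ i, (t - a i)) / (∏ j, (t - b j)) * (t - z) =
      ∏ j, (t - (Fin.cons z a : Fin (k + 1) → K) j) / (t - b j) := by
    intro t
    rw [prod_div_distrib, Fin.prod_univ_succ (fun j => t - (Fin.cons z a : Fin (k + 1) → K) j)]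
    simp only [Fin.cons_zero, Fin.cons_succ]
    ring
  rw [hprod, hprod]
  exact prod_sub_div_sub_lt_prod_sub_div_sub hb hx hxy

end LinearOrder

/-- Class IV restricted Cauchy matrix (only the top two entries of the last
column are nonzero): `(-1)^{r+1} det(C) < 0`; in particular `det C ≠ 0`. -/
theorem stmt_8 (n : ℕ) (a b : Fin (n + 2) → ℝ)
    (ha : StrictAnti a) (hb : StrictMono b)
    (h1 : ∀ i j : Fin (n + 2), j ≠ Fin.last (n + 1) → a i > b j)
    (h2 : a 0 > b (Fin.last (n + 1))) (h3 : a 1 > b (Fin.last (n + 1)))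
    (h4 : ∀ i : Fin (n + 2), 2 ≤ i.val → a i < b (Fin.last (n + 1))) :
    (-1 : ℝ) ^ (n + 2 + 1) *
      (Matrix.of fun i j : Fin (n + 2) =>
        if b j < a i then 1 / (a i - b j) else 0).det < 0 ∧
    (Matrix.of fun i j : Fin (n + 2) =>
      if b j < a i then 1 / (a i - b j) else 0).det ≠ 0 := by
  change (-1 : ℝ) ^ (n + 2 + 1) * (restrictedCauchyMatrix a b).det < 0 ∧
    (restrictedCauchyMatrix a b).det ≠ 0
  set β := b (Fin.last (n + 1))
  set a' : Fin n → ℝ := fun i => a i.succ.succ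
  set b' : Fin (n + 1) → ℝ := fun j => b j.castSucc
  have hb' : ∀ i j, b' j < a i := fun i j => h1 i _ (Fin.castSucc_lt_last j).ne
  have hdet := det_restrictedCauchyMatrix_eq a b h1 h2 h3
    fun i => (h4 i.succ.succ (by simp)).le
  obtain ⟨R, hR, hM⟩ := exists_det_cauchyMatrix_cons_eq a' b'
    (ha.comp_strictMono (Fin.strictMono_succ.comp Fin.strictMono_succ))
    (hb.comp Fin.strictMono_castSucc) fun i j => hb' _ _
  rw [hM _ (hb' 1), hM _ (hb' 0)] at hdet
  have key := prod_sub_div_prod_sub_mul_sub_lt (a := a') (b := b') (z := β)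
    (fun j => j.cases (hb (Fin.castSucc_lt_last 0)) fun i => hb' _ _)
    (fun j => j.cases h3 fun i => ha (Fin.lt_def.mpr (by simp))) (ha Fin.zero_lt_one)
  have hneg : (-1 : ℝ) ^ (n + 2 + 1) * (restrictedCauchyMatrix a b).det < 0 := by
    rw [hdet, ← mul_assoc, ← pow_add, show n + 2 + 1 + (n + 1) = 2 * (n + 2) by ring, pow_mul,
      neg_one_sq, one_pow, one_mul, sub_neg, inv_mul_eq_div, inv_mul_eq_div,
      div_lt_div_iff₀ (sub_pos.mpr h2) (sub_pos.mpr h3)]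
    linarith [mul_lt_mul_of_pos_right key hR]
  exact ⟨hneg, fun h => by simp [h] at hneg⟩
end

section
/- For a border strip (ribbon) λ/μ, the number of standard constructions gives: the evaluation y(λ/μ) := (t^{-1} s_{λ/μ}(1^t))|_{t=0} equals (-1)^{ℓ(λ)+1} / (λ_1 + ℓ(λ) - 1). Equivalently, for a connected ribbon R with n cells and height h (one less than the number of rows), the polynomial s_R(1^t) in t satisfies s_R(1^t) = (-1)^h t/n + O(t^2); i.e., s_R(1^t)/t evaluated at t=0 equals (-1)^h/n. -/
open Polynomial in
/-- The polynomial in `t` given by `h_k(1^t) = C(t+k-1, k)`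
(and `0` for `k < 0`), used as entries of the Jacobi–Trudi matrix. -/
noncomputable def hPoly (k : ℤ) : Polynomial ℚ :=
  if 0 ≤ k then C ((1 : ℚ) / (Nat.factorial k.toNat)) * ∏ i ∈ Finset.range k.toNat, (X + C (i : ℚ))
  else 0

open Polynomial Finset

lemma hPoly_neg {k : ℤ} (h : k < 0) : hPoly k = 0 := by simp [hPoly, not_le.mpr h]

lemma hPoly_zero : hPoly 0 = 1 := by simp [hPoly]

lemma hPoly_coeff_zero {k : ℤ} (h : 1 ≤ k) : (hPoly k).coeff 0 = 0 := by
  have hk : 0 ≤ k := by omega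
  have hn : 0 < k.toNat := by omega
  rw [Polynomial.coeff_zero_eq_eval_zero]
  simp only [hPoly, if_pos hk, eval_mul, eval_C, eval_prod]
  rw [Finset.prod_eq_zero (Finset.mem_range.mpr hn) (by simp)]
  ring

lemma hPoly_coeff_one {k : ℤ} (h : 1 ≤ k) : (hPoly k).coeff 1 = 1 / (k : ℚ) := by
  have hk : 0 ≤ k := by omega
  obtain ⟨n, hn⟩ : ∃ n : ℕ, k.toNat = n + 1 := ⟨k.toNat - 1, by omega⟩
  simp only [hPoly, if_pos hk, hn, coeff_C_mul]
  rw [Finset.prod_range_succ' (fun i => (X + C (i : ℚ)))]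
  simp only [Nat.cast_zero, map_zero, add_zero]
  rw [Polynomial.coeff_mul_X, Polynomial.coeff_zero_eq_eval_zero, eval_prod]
  have hprod : (∏ i ∈ Finset.range n, ((X + C ((i : ℚ) + 1)).eval 0))
      = ((Nat.factorial n : ℕ) : ℚ) := by
    rw [← Finset.prod_range_add_one_eq_factorial n, Nat.cast_prod]
    exact Finset.prod_congr rfl (fun i _ => by push_cast; simp)
  have heval : (∏ i ∈ Finset.range n, ((X + C (((i+1 : ℕ) : ℚ))).eval 0))
      = ((Nat.factorial n : ℕ) : ℚ) := by
    rw [← hprod]; exact Finset.prod_congr rfl (fun i _ => by push_cast; ring_nf)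
  rw [heval]
  have hkn : (k : ℚ) = (n : ℚ) + 1 := by
    have h2 : ((k.toNat : ℤ) : ℚ) = (k : ℚ) := by rw [Int.toNat_of_nonneg hk]
    rw [← h2, hn]; push_cast; ring
  rw [hkn, Nat.factorial_succ]
  have h1 : ((n:ℚ) + 1) ≠ 0 := by positivity
  have h2 : ((Nat.factorial n : ℕ) : ℚ) ≠ 0 := by exact_mod_cast Nat.factorial_ne_zero n
  push_cast
  field_simp

lemma coeff_one_prod' {ι : Type*} [DecidableEq ι] (s : Finset ι) (f : ι → Polynomial ℚ) :
    (∏ i ∈ s, f i).coeff 1 = ∑ i ∈ s, (f i).coeff 1 * ∏ j ∈ s.erase i, (f j).coeff 0 := by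
  induction s using Finset.induction_on with
  | empty => simp [Polynomial.coeff_one]
  | @insert a s ha ih =>
    rw [Finset.prod_insert ha, Polynomial.mul_coeff_one, ih, Polynomial.coeff_zero_prod,
      Finset.sum_insert ha, Finset.erase_insert ha]
    have hcong : ∀ i ∈ s, (f i).coeff 1 * ∏ j ∈ (insert a s).erase i, (f j).coeff 0
        = (f a).coeff 0 * ((f i).coeff 1 * ∏ j ∈ s.erase i, (f j).coeff 0) := fun i hi => by
      rw [Finset.erase_insert_of_ne (by rintro rfl; exact ha hi),
        Finset.prod_insert (fun h => ha (Finset.mem_of_mem_erase h))]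
      ring
    rw [Finset.sum_congr rfl hcong, ← Finset.mul_sum]
    ring

/-- For a border strip (ribbon) `λ/μ` (so `μ_j = λ_{j+1} - 1`, with `λ` a positive
weakly decreasing sequence of length `ℓ = m+1`), the principal specialization
`s_{λ/μ}(1^t)`, computed via the Jacobi–Trudi determinant with entries
`h_k(1^t) = C(t+k-1,k)`, is a polynomial in `t` with constant term `0` whose
coefficient of `t` (i.e. `(t⁻¹ s_{λ/μ}(1^t))|_{t=0}`) equals
`(-1)^{ℓ(λ)+1} / (λ₁ + ℓ(λ) - 1)`. -/
theorem stmt_10 (m : ℕ) (lam : Fin (m + 1) → ℕ)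
    (hpos : ∀ i, 0 < lam i) (hdec : Antitone lam) :
    let mu : Fin (m + 1) → ℕ :=
      fun j => if h : j.val + 1 < m + 1 then lam ⟨j.val + 1, h⟩ - 1 else 0
    let S : Polynomial ℚ :=
      (Matrix.of fun i j : Fin (m + 1) =>
        hPoly ((lam i : ℤ) - (mu j : ℤ) - (i.val + 1) + (j.val + 1))).det
    S.coeff 0 = 0 ∧
    S.coeff 1 = (-1 : ℚ) ^ ((m + 1) + 1) / ((lam 0 : ℚ) + (m + 1) - 1) := by
  intro mu S
  classical
  set A : Matrix (Fin (m+1)) (Fin (m+1)) (Polynomial ℚ) :=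
    Matrix.of fun i j : Fin (m+1) =>
      hPoly ((lam i : ℤ) - (mu j : ℤ) - (i.val + 1) + (j.val + 1)) with hA
  have hSdet : S = A.det := rfl
  -- value of mu
  have hmu_lt : ∀ (j : Fin (m+1)) (h : j.val + 1 < m + 1),
      (mu j : ℤ) = (lam ⟨j.val + 1, h⟩ : ℤ) - 1 := by
    intro j h
    show ((if h' : j.val + 1 < m + 1 then lam ⟨j.val + 1, h'⟩ - 1 else 0 : ℕ) : ℤ) = _
    rw [dif_pos h]
    have := hpos ⟨j.val + 1, h⟩
    omega
  have hmu_last : ∀ (j : Fin (m+1)), ¬ (j.val + 1 < m + 1) → (mu j : ℤ) = 0 := by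
    intro j h
    show ((if h' : j.val + 1 < m + 1 then lam ⟨j.val + 1, h'⟩ - 1 else 0 : ℕ) : ℤ) = _
    rw [dif_neg h]; rfl
  -- entry lemmas
  have key_neg : ∀ i j : Fin (m+1), j.val + 1 < i.val → A i j = 0 := by
    intro i j hij
    have hi := i.isLt
    show hPoly _ = 0
    apply hPoly_neg
    by_cases h : j.val + 1 < m + 1
    · rw [hmu_lt j h]
      have hle : lam i ≤ lam ⟨j.val + 1, h⟩ := hdec (by simpa [Fin.le_def] using hij.le)
      push_cast
      omega
    · omega
  have key_one : ∀ i j : Fin (m+1), i.val = j.val + 1 → A i j = 1 := by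
    intro i j hij
    have hi := i.isLt
    have h : j.val + 1 < m + 1 := by omega
    show hPoly _ = 1
    have hlam : lam i = lam ⟨j.val + 1, h⟩ := by congr 1; exact Fin.ext hij
    rw [hmu_lt j h, hlam]
    have : ((lam ⟨j.val + 1, h⟩ : ℕ) : ℤ) - ((lam ⟨j.val + 1, h⟩ : ℕ) - 1) - (i.val + 1) + (j.val + 1) = 0 := by
      omega
    rw [this, hPoly_zero]
  have key_ge : ∀ i j : Fin (m+1), i.val ≤ j.val →
      1 ≤ (lam i : ℤ) - (mu j : ℤ) - (i.val + 1) + (j.val + 1) := by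
    intro i j hij
    have hj := j.isLt
    by_cases h : j.val + 1 < m + 1
    · rw [hmu_lt j h]
      have hle : lam ⟨j.val + 1, h⟩ ≤ lam i := hdec (by simp [Fin.le_def]; omega)
      push_cast
      omega
    · rw [hmu_last j h]
      have := hpos i
      push_cast
      omega
  have ev0 : ∀ i j : Fin (m+1), i.val ≤ j.val → (A i j).coeff 0 = 0 := by
    intro i j h
    exact hPoly_coeff_zero (key_ge i j h)
  -- the rotation permutation
  set σ₀ : Equiv.Perm (Fin (m+1)) := finRotate (m+1) with hσ₀
  have hσ₀_apply : ∀ j : Fin (m+1), σ₀ j = j + 1 := fun j => finRotate_succ_apply j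
  have hσ₀_last : σ₀ (Fin.last m) = 0 := by rw [hσ₀_apply, Fin.last_add_one]
  have hσ₀_lt : ∀ j : Fin (m+1), j.val < m → (σ₀ j).val = j.val + 1 := by
    intro j hj
    rw [hσ₀_apply, Fin.val_add_one]
    have : j ≠ Fin.last m := by
      intro h; rw [h] at hj; simp at hj
    rw [if_neg this]
  -- coefficient 0
  have h0 : S.coeff 0 = 0 := by
    rw [hSdet, Polynomial.coeff_zero_eq_eval_zero]
    have : A.det.eval 0 = (A.map (Polynomial.evalRingHom 0)).det := by
      have h := RingHom.map_det (Polynomial.evalRingHom 0) A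
      simpa [RingHom.mapMatrix_apply] using h
    rw [this]
    apply Matrix.det_eq_zero_of_row_eq_zero 0
    intro j
    simp only [Matrix.map_apply, Polynomial.coe_evalRingHom]
    rw [← Polynomial.coeff_zero_eq_eval_zero]
    exact ev0 0 j (Nat.zero_le _)
  refine ⟨h0, ?_⟩
  -- coefficient 1
  have hterm : ∀ σ : Equiv.Perm (Fin (m+1)), σ ≠ σ₀ →
      (∏ j, A (σ j) j).coeff 1 = 0 := by
    intro σ hσ
    by_cases hbad : ∃ j, j.val + 1 < (σ j).val
    · obtain ⟨j, hj⟩ := hbad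
      have hz : (∏ x, A (σ x) x) = 0 :=
        Finset.prod_eq_zero (Finset.mem_univ j) (key_neg _ _ hj)
      rw [hz]
      simp
    · push_neg at hbad
      have hex : ∃ j : Fin (m+1), j.val < m ∧ (σ j).val ≤ j.val := by
        by_contra hc
        push_neg at hc
        apply hσ
        have hval : ∀ j : Fin (m+1), j.val < m → (σ j).val = j.val + 1 := by
          intro j hj
          have h1 := hbad j
          have h2 := hc j hj
          omega
        have hlast : (σ (Fin.last m)).val = 0 := by
          by_contra hne
          have hv1 : 1 ≤ (σ (Fin.last m)).val := by omega
          have hvle : (σ (Fin.last m)).val ≤ m := by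
            have := (σ (Fin.last m)).isLt; omega
          have hm : 0 < m := by omega
          set v := (σ (Fin.last m)).val with hv
          have hjlt : v - 1 < m + 1 := by omega
          set j : Fin (m+1) := ⟨v - 1, hjlt⟩ with hj
          have hjm : j.val < m := by simp [hj]; omega
          have : (σ j).val = (σ (Fin.last m)).val := by
            rw [hval j hjm]; simp [hj]; omega
          have heq : σ j = σ (Fin.last m) := Fin.ext this
          have := σ.injective heq
          rw [this] at hjm
          simp at hjm
        ext x
        rcases Nat.lt_or_ge x.val m with hx | hx
        · rw [hσ₀_apply, hval x hx, Fin.val_add_one]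
          have : x ≠ Fin.last m := by
            intro h; rw [h] at hx; simp at hx
          rw [if_neg this]
        · have hxl : x = Fin.last m := Fin.ext (by have := x.isLt; simp [Fin.last]; omega)
          rw [hxl, hlast, hσ₀_last]
          rfl
      obtain ⟨j₁, hj₁m, hj₁⟩ := hex
      have hj₁ne : j₁ ≠ Fin.last m := by
        intro h; rw [h] at hj₁m; simp at hj₁m
      rw [coeff_one_prod']
      apply Finset.sum_eq_zero
      intro b _
      rcases ne_or_eq b j₁ with hb | rfl
      · have hz : (∏ x ∈ Finset.univ.erase b, (A (σ x) x).coeff 0) = 0 :=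
          Finset.prod_eq_zero (Finset.mem_erase.mpr ⟨hb.symm, Finset.mem_univ _⟩)
            (ev0 _ _ hj₁)
        rw [hz]
        ring
      · have hlastmem : Fin.last m ∈ (Finset.univ.erase b) :=
          Finset.mem_erase.mpr ⟨fun h => hj₁ne h.symm, Finset.mem_univ _⟩
        have hz : (∏ x ∈ Finset.univ.erase b, (A (σ x) x).coeff 0) = 0 :=
          Finset.prod_eq_zero hlastmem
            (ev0 _ _ (by have := (σ (Fin.last m)).isLt; simp [Fin.last]; omega))
        rw [hz]
        ring
  -- main computation
  have hS1 : S.coeff 1 = ((Equiv.Perm.sign σ₀ : ℤ) : ℚ) *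
      (∏ j, A (σ₀ j) j).coeff 1 := by
    rw [hSdet, Matrix.det_apply', Polynomial.finset_sum_coeff]
    rw [Finset.sum_eq_single σ₀]
    · rw [← Polynomial.C_eq_intCast, Polynomial.coeff_C_mul]
    · intro σ _ hσ
      rw [← Polynomial.C_eq_intCast, Polynomial.coeff_C_mul, hterm σ hσ, mul_zero]
    · intro h
      exact absurd (Finset.mem_univ σ₀) h
  -- the σ₀ product coefficient
  have hklast : (lam (0 : Fin (m+1)) : ℤ) - (mu (Fin.last m) : ℤ)
      - ((0 : Fin (m+1)).val + 1) + ((Fin.last m).val + 1) = (lam 0 : ℤ) + m := by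
    rw [hmu_last (Fin.last m) (by simp [Fin.last])]
    simp [Fin.last]
  have hprod : (∏ j, A (σ₀ j) j).coeff 1 = 1 / ((lam 0 : ℚ) + m) := by
    rw [coeff_one_prod']
    rw [Finset.sum_eq_single (Fin.last m)]
    · have hcoeff1 : (A (σ₀ (Fin.last m)) (Fin.last m)).coeff 1 = 1 / ((lam 0 : ℚ) + m) := by
        rw [hσ₀_last]
        show (hPoly _).coeff 1 = _
        rw [hklast, hPoly_coeff_one (by have := hpos 0; omega)]
        push_cast
        ring
      have hprod1 : (∏ j ∈ Finset.univ.erase (Fin.last m), (A (σ₀ j) j).coeff 0) = 1 := by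
        apply Finset.prod_eq_one
        intro j hj
        have hjm : j.val < m := by
          have h1 := Finset.mem_erase.mp hj
          have h2 := j.isLt
          have : j ≠ Fin.last m := h1.1
          rcases Nat.lt_or_ge j.val m with h | h
          · exact h
          · exact absurd (Fin.ext (by simp [Fin.last]; omega)) this
        rw [key_one _ _ (hσ₀_lt j hjm)]
        simp
      rw [hcoeff1, hprod1, mul_one]
    · intro b _ hb
      have hlastmem : Fin.last m ∈ (Finset.univ.erase b) :=
        Finset.mem_erase.mpr ⟨fun h => hb h.symm, Finset.mem_univ _⟩
      have hz : (∏ x ∈ Finset.univ.erase b, (A (σ₀ x) x).coeff 0) = 0 := by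
        apply Finset.prod_eq_zero hlastmem
        rw [hσ₀_last]
        exact ev0 _ _ (by simp)
      rw [hz]
      ring
    · intro h
      exact absurd (Finset.mem_univ _) h
  rw [hS1, hprod]
  have hsign : ((Equiv.Perm.sign σ₀ : ℤ) : ℚ) = (-1 : ℚ) ^ m := by
    rw [hσ₀, sign_finRotate]
    push_cast
    ring
  rw [hsign]
  have hden : ((lam 0 : ℚ) + (m + 1) - 1) = ((lam 0 : ℚ) + m) := by push_cast; ring
  have hpow : (-1 : ℚ) ^ ((m + 1) + 1) = (-1 : ℚ) ^ m := by rw [pow_succ, pow_succ]; ring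
  rw [hden, hpow, mul_one_div]
end

section
/- Let A be an n×n matrix of reals such that A is obtained from a Cauchy matrix with a_1 > ... > a_n, b_1 < ... < b_n, all a_i > b_j. Then every square submatrix of A also has positive determinant (A is totally positive). -/
/-!
Eliminating the first row and column of a Cauchy matrix leaves, up to positive row and column
scalings, the Cauchy matrix of the remaining nodes: the pivot `(0, 0)` has Schur complement with
entries `(a₀ - aᵢ)(bⱼ - b₀) / ((aᵢ - bⱼ)(aᵢ - b₀)(a₀ - bⱼ))`. Induction on the size gives positivity
of the determinant, and every square submatrix along increasing rows and columns is again such a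
Cauchy matrix.
-/

namespace Matrix

section Field

variable {K : Type*} [Field K]

theorem det_succ_eq_mul_det_schur {k : ℕ} (M : Matrix (Fin (k + 1)) (Fin (k + 1)) K)
    (h : M 0 0 ≠ 0) :
    M.det = M 0 0 * (of fun i j : Fin k => M i.succ j.succ - M i.succ 0 / M 0 0 * M 0 j.succ).det := by
  set c : Fin (k + 1) → K := Fin.cases 0 fun i => M i.succ 0 / M 0 0
  set N : Matrix (Fin (k + 1)) (Fin (k + 1)) K := of fun i j => M i j - c i * M 0 j
  have hN : M.det = N.det :=
    det_eq_of_forall_row_eq_smul_add_const c 0 rfl fun i j => by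
      cases i using Fin.cases <;> simp [N, c]
  have hN_col : ∀ i : Fin k, N i.succ 0 = 0 := fun i => by simp [N, c, div_mul_cancel₀ _ h]
  rw [hN, det_succ_column_zero, Fin.sum_univ_succ]
  simp [hN_col, N, c, submatrix]

variable {ι κ : Type*}

def cauchyMatrix (a : ι → K) (b : κ → K) : Matrix ι κ K :=
  of fun i j => 1 / (a i - b j)

theorem cauchyMatrix_submatrix {ι' κ' : Type*} (a : ι → K) (b : κ → K) (f : ι' → ι) (g : κ' → κ) :
    (cauchyMatrix a b).submatrix f g = cauchyMatrix (a ∘ f) (b ∘ g) :=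
  rfl

theorem det_cauchyMatrix_succ {k : ℕ} (a b : Fin (k + 1) → K) (hab : ∀ i j, a i ≠ b j) :
    (cauchyMatrix a b).det = 1 / (a 0 - b 0) *
      ((∏ i : Fin k, (a 0 - a i.succ) / (a i.succ - b 0)) *
        ((∏ j : Fin k, (b j.succ - b 0) / (a 0 - b j.succ)) *
          (cauchyMatrix (Fin.tail a) (Fin.tail b)).det)) := by
  have hsub : ∀ i j, a i - b j ≠ 0 := fun i j => sub_ne_zero.2 (hab i j)
  rw [det_succ_eq_mul_det_schur _ (by simpa [cauchyMatrix] using hsub 0 0), ← det_mul_row,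
    ← det_mul_column]
  congr 2
  ext i j
  simp only [cauchyMatrix, of_apply, Fin.tail]
  field_simp [hsub i.succ j.succ, hsub i.succ 0, hsub 0 j.succ, hsub 0 0]
  ring

end Field

theorem det_cauchyMatrix_pos {K : Type*} [Field K] [LinearOrder K] [IsStrictOrderedRing K] :
    ∀ {k : ℕ} {a b : Fin k → K}, StrictAnti a → StrictMono b → (∀ i j, b j < a i) →
      0 < (cauchyMatrix a b).det
  | 0, _, _, _, _, _ => by simp
  | k + 1, a, b, ha, hb, hab => by
    have htail : 0 < (cauchyMatrix (Fin.tail a) (Fin.tail b)).det :=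
      det_cauchyMatrix_pos (ha.comp_strictMono Fin.strictMono_succ) (hb.comp Fin.strictMono_succ)
        fun i j => hab _ _
    rw [det_cauchyMatrix_succ a b fun i j => (hab i j).ne']
    have hpos : ∀ i j, 0 < a i - b j := fun i j => sub_pos.2 (hab i j)
    have ha0 : ∀ i : Fin k, 0 < a 0 - a i.succ := fun i => sub_pos.2 (ha (Fin.succ_pos i))
    have hb0 : ∀ j : Fin k, 0 < b j.succ - b 0 := fun j => sub_pos.2 (hb (Fin.succ_pos j))
    exact mul_pos (one_div_pos.2 (hpos 0 0)) <| mul_pos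
      (Finset.prod_pos fun i _ => div_pos (ha0 i) (hpos i.succ 0)) <| mul_pos
      (Finset.prod_pos fun j _ => div_pos (hb0 j) (hpos 0 j.succ)) htail

end Matrix

/-- A Cauchy matrix `(1/(aᵢ - bⱼ))` with `a` strictly decreasing, `b` strictly
increasing and `aᵢ > bⱼ` for all `i,j` is totally positive: every square
submatrix has positive determinant. -/
theorem stmt_16 (n : ℕ) (a b : Fin n → ℝ)
    (ha : StrictAnti a) (hb : StrictMono b)
    (hab : ∀ i j, a i > b j) :
    ∀ (k : ℕ) (f g : Fin k → Fin n), StrictMono f → StrictMono g →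
      0 < ((Matrix.of fun i j : Fin n => 1 / (a i - b j)).submatrix f g).det := by
  intro k f g hf hg
  change 0 < ((Matrix.cauchyMatrix a b).submatrix f g).det
  rw [Matrix.cauchyMatrix_submatrix]
  exact Matrix.det_cauchyMatrix_pos (ha.comp_strictMono hf) (hb.comp hg) fun i j => hab (f i) (g j)
end

section
/- Let n ≥ 2, and let a_1 > a_2 > ... > a_n, b_1 < ... < b_n be reals with a_i > b_j for all (i,j) ≠ (n,n) and a_n < b_n. For the matrix C with c_{ij} = 1/(a_i-b_j) for (i,j) ≠ (n,n) and c_{nn} = 0, det(C) equals (1/(a_n-b_n)) · ∏_{1≤i<j≤n-1}(a_i-a_j)(b_j-b_i) · ∏_{i,j=1}^{n-1} 1/(a_i-b_j) · (M - 1), where M = ∏_{i=1}^{n-1} ((a_n-a_i)(b_i-b_n))/((a_n-b_i)(a_i-b_n)). -/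
open Finset Matrix

-- scaling rows and columns
lemma det_scale {n : ℕ} (r c : Fin n → ℝ) (M : Matrix (Fin n) (Fin n) ℝ) :
    (Matrix.of fun i j => r i * c j * M i j).det = (∏ i, r i) * (∏ j, c j) * M.det := by
  have h : (Matrix.of fun i j => r i * c j * M i j) =
      Matrix.diagonal r * M * Matrix.diagonal c := by
    ext i j
    simp [Matrix.diagonal_mul, Matrix.mul_diagonal]
    ring
  rw [h, Matrix.det_mul, Matrix.det_mul, Matrix.det_diagonal, Matrix.det_diagonal]
  ring

-- det of matrix whose last column is e_last
lemma det_lastColOne {n : ℕ} (M : Matrix (Fin (n+1)) (Fin (n+1)) ℝ)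
    (h : ∀ i, M i (Fin.last n) = if i = Fin.last n then 1 else 0) :
    M.det = (M.submatrix Fin.castSucc Fin.castSucc).det := by
  rw [Matrix.det_succ_column M (Fin.last n)]
  rw [Finset.sum_eq_single (Fin.last n)]
  · rw [h]
    simp only [Fin.succAbove_last, if_pos rfl, pow_add, mul_one]
    rw [mul_assoc, ← pow_add]
    simp [Even.neg_one_pow ⟨n, rfl⟩]
  · intro i _ hi
    rw [h]
    simp [hi]
  · simp

lemma det_lastRowOne {n : ℕ} (M : Matrix (Fin (n+1)) (Fin (n+1)) ℝ)
    (h : ∀ j, M (Fin.last n) j = if j = Fin.last n then 1 else 0) :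
    M.det = (M.submatrix Fin.castSucc Fin.castSucc).det := by
  rw [← Matrix.det_transpose M, det_lastColOne Mᵀ (fun i => h i), ← Matrix.det_transpose]
  rfl

lemma prod_Iio_castSucc {n : ℕ} (j : Fin n) (f : Fin (n+1) → ℝ) :
    ∏ i ∈ Finset.Iio (Fin.castSucc j), f i = ∏ i ∈ Finset.Iio j, f (Fin.castSucc i) := by
  rw [Fin.Iio_castSucc, Finset.prod_map]
  rfl

lemma prod_Iio_last {n : ℕ} (f : Fin (n+1) → ℝ) :
    ∏ i ∈ Finset.Iio (Fin.last n), f i = ∏ i : Fin n, f (Fin.castSucc i) := by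
  rw [Fin.Iio_last_eq_map, Finset.prod_map]
  rfl

lemma prod_pairs {n : ℕ} (g : Fin n → Fin n → ℝ) :
    ∏ p ∈ univ.filter (fun p : Fin n × Fin n => p.1 < p.2), g p.1 p.2
      = ∏ j, ∏ i ∈ Finset.Iio j, g i j := by
  rw [Finset.prod_sigma']
  refine (Finset.prod_nbij (fun x : Σ _ : Fin n, Fin n => (x.2, x.1)) ?_ ?_ ?_ ?_).symm
  · rintro ⟨j, i⟩ hm
    simp only [Finset.mem_sigma, Finset.mem_univ, true_and, Finset.mem_Iio] at hm
    simp [hm]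
  · rintro ⟨j₁, i₁⟩ h₁ ⟨j₂, i₂⟩ h₂ he
    simp only [Prod.mk.injEq] at he
    obtain ⟨h1, h2⟩ := he
    subst h1; subst h2; rfl
  · rintro ⟨i, j⟩ hm
    simp only [Finset.coe_filter, Finset.mem_univ, true_and, Set.mem_setOf_eq] at hm
    exact ⟨⟨j, i⟩, by simp [hm], rfl⟩
  · rintro ⟨j, i⟩ _; rfl

lemma cauchy_det : ∀ (n : ℕ) (a b : Fin n → ℝ), (∀ i j, a i ≠ b j) →
    (Matrix.of fun i j => (a i - b j)⁻¹).det
      = (∏ j, ∏ i ∈ Finset.Iio j, (a i - a j) * (b j - b i)) * ∏ i, ∏ j, (a i - b j)⁻¹ := by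
  intro n
  induction n with
  | zero => intro a b _; simp
  | succ n IH =>
    intro a b h
    have hne : ∀ i j, a i - b j ≠ 0 := fun i j => sub_ne_zero.2 (h i j)
    set L := Fin.last n with hL
    -- column operations: C_j := C_j - C_L for j ≠ L
    set E : Matrix (Fin (n+1)) (Fin (n+1)) ℝ :=
      Matrix.of (fun k j => if k = j then 1 else if k = L ∧ j ≠ L then (-1 : ℝ) else 0) with hE
    have hEdet : E.det = 1 := by
      rw [Matrix.det_of_lowerTriangular E]
      · simp [hE]
      · intro k j hkj
        have hkj' : k < j := hkj
        simp only [hE, Matrix.of_apply]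
        rw [if_neg (ne_of_lt hkj'), if_neg]
        rintro ⟨rfl, -⟩
        exact absurd hkj' (not_lt.2 (Fin.le_last j))
    set A := (Matrix.of fun i j : Fin (n+1) => (a i - b j)⁻¹) with hA
    set B : Matrix (Fin (n+1)) (Fin (n+1)) ℝ :=
      Matrix.of (fun i j => if j = L then (a i - b L)⁻¹
        else (a i - b j)⁻¹ - (a i - b L)⁻¹) with hB
    have hAE : A * E = B := by
      ext i j
      simp only [Matrix.mul_apply, hE, hA, hB, Matrix.of_apply]
      rcases eq_or_ne j L with hj | hj
      · rw [if_pos hj, hj, Finset.sum_eq_single L]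
        · simp
        · intro k _ hk
          simp [hk]
        · simp
      · rw [if_neg hj, Finset.sum_eq_add_of_mem j L (Finset.mem_univ _) (Finset.mem_univ _)
          (by rintro rfl; exact hj rfl) ?_]
        · simp only [if_pos rfl, mul_one, if_neg (Ne.symm hj), and_true, eq_self_iff_true,
            true_and, if_pos hj, mul_neg_one, if_true]
          ring
        · intro k _ hk
          simp only [if_neg hk.1]
          rw [if_neg (by rintro ⟨rfl, -⟩; exact hk.2 rfl), mul_zero]
    have hBdet : B.det = A.det := by rw [← hAE, Matrix.det_mul, hEdet, mul_one]
    -- scale rows/columns of B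
    set r : Fin (n+1) → ℝ := fun i => (a i - b L)⁻¹ with hr
    set c : Fin (n+1) → ℝ := fun j => if j = L then 1 else b j - b L with hc
    set G : Matrix (Fin (n+1)) (Fin (n+1)) ℝ :=
      Matrix.of (fun i j => if j = L then 1 else (a i - b j)⁻¹) with hG
    have hBG : B = Matrix.of fun i j => r i * c j * G i j := by
      ext i j
      simp only [hB, hr, hc, hG, Matrix.of_apply]
      rcases eq_or_ne j L with hj | hj
      · simp [hj]
      · rw [if_neg hj, if_neg hj, if_neg hj]
        have h1 := hne i j
        have h2 := hne i L
        rw [inv_sub_inv h1 h2, div_eq_mul_inv, mul_inv]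
        ring
    have hBdet2 : B.det = (∏ i, r i) * (∏ j, c j) * G.det := by rw [hBG, det_scale]
    -- row operations on G
    set E' : Matrix (Fin (n+1)) (Fin (n+1)) ℝ :=
      Matrix.of (fun i k => if i = k then 1 else if k = L ∧ i ≠ L then (-1 : ℝ) else 0) with hE'
    have hE'det : E'.det = 1 := by
      rw [Matrix.det_of_upperTriangular]
      · simp [hE']
      · intro i k hik
        have hik' : k < i := hik
        simp only [hE', Matrix.of_apply]
        rw [if_neg (ne_of_gt hik'), if_neg]
        rintro ⟨rfl, -⟩
        exact absurd hik' (not_lt.2 (Fin.le_last i))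
    set H : Matrix (Fin (n+1)) (Fin (n+1)) ℝ :=
      Matrix.of (fun i j => if i = L then (if j = L then 1 else (a L - b j)⁻¹)
        else (if j = L then 0 else (a i - b j)⁻¹ - (a L - b j)⁻¹)) with hH
    have hEG : E' * G = H := by
      ext i j
      simp only [Matrix.mul_apply, hE', hG, hH, Matrix.of_apply]
      rcases eq_or_ne i L with hi | hi
      · rw [if_pos hi, hi, Finset.sum_eq_single L]
        · simp
        · intro k _ hk
          rw [if_neg (Ne.symm hk), if_neg (by rintro ⟨-, hc'⟩; exact hc' rfl), zero_mul]
        · simp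
      · rw [if_neg hi, Finset.sum_eq_add_of_mem i L (Finset.mem_univ _) (Finset.mem_univ _)
          (by rintro rfl; exact hi rfl) ?_]
        · have e2 : (if i = L then (1:ℝ) else if L = L ∧ i ≠ L then -1 else 0) = -1 := by
            rw [if_neg hi, if_pos (show L = L ∧ i ≠ L from ⟨rfl, hi⟩)]
          rw [if_pos rfl, e2, one_mul, neg_one_mul]
          rcases eq_or_ne j L with hj | hj
          · rw [if_pos hj, if_pos hj, if_pos hj]
            ring
          · rw [if_neg hj, if_neg hj, if_neg hj]
            ring
        · intro k _ hk
          rw [if_neg (Ne.symm hk.1), if_neg (by rintro ⟨rfl, -⟩; exact hk.2 rfl), zero_mul]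
    have hHdet : H.det = G.det := by rw [← hEG, Matrix.det_mul, hE'det, one_mul]
    -- expand along last column
    have hcol : ∀ i, H i (Fin.last n) = if i = Fin.last n then 1 else 0 := by
      intro i
      rcases eq_or_ne i L with hi | hi
      · simp [hH, hi, ← hL]
      · simp [hH, hi, ← hL]
    have hHsub : H.det = (H.submatrix Fin.castSucc Fin.castSucc).det := det_lastColOne H hcol
    have hsub : H.submatrix Fin.castSucc Fin.castSucc =
        Matrix.of (fun i j : Fin n => (a L - a i.castSucc) * (a L - b j.castSucc)⁻¹ *
          (Matrix.of fun i j : Fin n => (a i.castSucc - b j.castSucc)⁻¹) i j) := by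
      ext i j
      have hi : (i.castSucc : Fin (n+1)) ≠ L := (Fin.castSucc_lt_last i).ne
      have hj : (j.castSucc : Fin (n+1)) ≠ L := (Fin.castSucc_lt_last j).ne
      simp only [Matrix.submatrix_apply, hH, Matrix.of_apply, if_neg hi, if_neg hj]
      have h1 := hne i.castSucc j.castSucc
      have h2 := hne L j.castSucc
      rw [inv_sub_inv h1 h2, div_eq_mul_inv, mul_inv]
      ring
    set P := ∏ j : Fin n, ∏ i ∈ Finset.Iio j,
      (a i.castSucc - a j.castSucc) * (b j.castSucc - b i.castSucc) with hP
    set Q := ∏ i : Fin n, ∏ j : Fin n, (a i.castSucc - b j.castSucc)⁻¹ with hQ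
    have hsubdet : (H.submatrix Fin.castSucc Fin.castSucc).det =
        (∏ i : Fin n, (a L - a i.castSucc)) * (∏ j : Fin n, (a L - b j.castSucc)⁻¹) * (P * Q) := by
      rw [hsub, det_scale, IH (fun i => a i.castSucc) (fun j => b j.castSucc)
        (fun i j => h i.castSucc j.castSucc)]
    -- compute the scalar products
    have hrprod : ∏ i, r i = (∏ i : Fin n, (a i.castSucc - b L)⁻¹) * (a L - b L)⁻¹ := by
      rw [hr, Fin.prod_univ_castSucc, hL]
    have hcprod : ∏ j, c j = ∏ j : Fin n, (b j.castSucc - b L) := by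
      rw [hc, Fin.prod_univ_castSucc]
      have h1 : (if (Fin.last n : Fin (n+1)) = L then (1:ℝ) else b (Fin.last n) - b L) = 1 :=
        if_pos hL.symm
      rw [h1, mul_one]
      refine Finset.prod_congr rfl fun j _ => if_neg ?_
      rw [hL]
      exact (Fin.castSucc_lt_last j).ne
    -- decompose the RHS of the goal
    have hpair : (∏ j : Fin (n+1), ∏ i ∈ Finset.Iio j, (a i - a j) * (b j - b i))
        = P * ∏ i : Fin n, (a i.castSucc - a L) * (b L - b i.castSucc) := by
      rw [Fin.prod_univ_castSucc, prod_Iio_last, hP, ← hL]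
      congr 1
      exact Finset.prod_congr rfl fun j _ => prod_Iio_castSucc j _
    have hinv : (∏ i : Fin (n+1), ∏ j : Fin (n+1), (a i - b j)⁻¹)
        = (Q * ∏ i : Fin n, (a i.castSucc - b L)⁻¹) *
          ((∏ j : Fin n, (a L - b j.castSucc)⁻¹) * (a L - b L)⁻¹) := by
      rw [Fin.prod_univ_castSucc, ← hL]
      congr 1
      · rw [hQ, ← Finset.prod_mul_distrib]
        exact Finset.prod_congr rfl fun i _ => by rw [Fin.prod_univ_castSucc]
      · rw [Fin.prod_univ_castSucc]
    have hsign : ∏ i : Fin n, (a i.castSucc - a L) * (b L - b i.castSucc)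
        = (∏ i : Fin n, (a L - a i.castSucc)) * (∏ i : Fin n, (b i.castSucc - b L)) := by
      rw [← Finset.prod_mul_distrib]
      exact Finset.prod_congr rfl fun i _ => by ring
    calc A.det = B.det := hBdet.symm
      _ = (∏ i, r i) * (∏ j, c j) * G.det := hBdet2
      _ = (∏ i, r i) * (∏ j, c j) * ((∏ i : Fin n, (a L - a i.castSucc)) *
            (∏ j : Fin n, (a L - b j.castSucc)⁻¹) * (P * Q)) := by
          rw [← hHdet, hHsub, hsubdet]
      _ = (∏ j : Fin (n+1), ∏ i ∈ Finset.Iio j, (a i - a j) * (b j - b i)) *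
            ∏ i : Fin (n+1), ∏ j : Fin (n+1), (a i - b j)⁻¹ := by
          rw [hrprod, hcprod, hpair, hinv, hsign]
          ring

open Finset in
/-- Exact determinant evaluation for Class II restricted Cauchy matrices:
`det C = (1/(a_n - b_n)) ∏_{i<j≤n-1}(a_i-a_j)(b_j-b_i) ∏_{i,j≤n-1} 1/(a_i-b_j) · (M-1)`
where `M = ∏_{i<n} ((a_n-a_i)(b_i-b_n))/((a_n-b_i)(a_i-b_n))`. -/
theorem stmt_17 (m : ℕ) (a b : Fin (m + 2) → ℝ)
    (ha : StrictAnti a) (hb : StrictMono b)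
    (hab : ∀ i j : Fin (m + 2), (i, j) ≠ (Fin.last (m + 1), Fin.last (m + 1)) → a i > b j)
    (hlast : a (Fin.last (m + 1)) < b (Fin.last (m + 1))) :
    (Matrix.of fun i j : Fin (m + 2) =>
        if b j < a i then 1 / (a i - b j) else 0).det
      = (1 / (a (Fin.last (m + 1)) - b (Fin.last (m + 1)))) *
        (∏ p ∈ univ.filter (fun p : Fin (m + 1) × Fin (m + 1) => p.1 < p.2),
          ((a p.1.castSucc - a p.2.castSucc) * (b p.2.castSucc - b p.1.castSucc))) *
        (∏ i : Fin (m + 1), ∏ j : Fin (m + 1), 1 / (a i.castSucc - b j.castSucc)) *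
        ((∏ i : Fin (m + 1),
          ((a (Fin.last (m + 1)) - a i.castSucc) * (b i.castSucc - b (Fin.last (m + 1)))) /
          ((a (Fin.last (m + 1)) - b i.castSucc) * (a i.castSucc - b (Fin.last (m + 1))))) - 1) := by
  have h : ∀ i j : Fin (m + 2), a i ≠ b j := by
    intro i j
    by_cases hij : (i, j) = (Fin.last (m + 1), Fin.last (m + 1))
    · obtain ⟨h1, h2⟩ := Prod.mk.injEq _ _ _ _ ▸ hij
      rw [h1, h2]
      exact ne_of_lt hlast
    · exact ne_of_gt (hab i j hij)
  have hne : ∀ i j, a i - b j ≠ 0 := fun i j => sub_ne_zero.2 (h i j)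
  set L := Fin.last (m + 1) with hLdef
  set F : Matrix (Fin (m + 2)) (Fin (m + 2)) ℝ := Matrix.of fun i j => (a i - b j)⁻¹ with hF
  have hC : (Matrix.of fun i j : Fin (m + 2) => if b j < a i then 1 / (a i - b j) else 0)
      = F.updateRow L (F L + (-(a L - b L)⁻¹) • (Pi.single L (1 : ℝ) : Fin (m+2) → ℝ)) := by
    ext i j
    rcases eq_or_ne i L with hi | hi
    · rw [hi, Matrix.updateRow_self]
      rcases eq_or_ne j L with hj | hj
      · rw [hj]
        simp only [Matrix.of_apply, Pi.add_apply, Pi.smul_apply, Pi.single_eq_same, smul_eq_mul,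
          hF]
        rw [if_neg (not_lt.2 hlast.le)]
        ring
      · have hbj : b j < a L := hab L j (by simp [Prod.ext_iff, hj])
        simp only [Matrix.of_apply, Pi.add_apply, Pi.smul_apply, smul_eq_mul, hF,
          Pi.single_eq_of_ne hj]
        rw [if_pos hbj, one_div]
        ring
    · rw [Matrix.updateRow_ne hi]
      have hbj : b j < a i := hab i j (by simp [Prod.ext_iff, hi])
      simp only [Matrix.of_apply, hF]
      rw [if_pos hbj, one_div]
  rw [hC, Matrix.det_updateRow_add, Matrix.det_updateRow_smul, Matrix.updateRow_eq_self]
  -- the minor determinant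
  have hrow : ∀ j, (F.updateRow L (Pi.single L (1:ℝ))) (Fin.last (m+1)) j
      = if j = Fin.last (m+1) then 1 else 0 := by
    intro j
    rw [← hLdef, Matrix.updateRow_self]
    rcases eq_or_ne j L with hj | hj
    · rw [hj, if_pos rfl, Pi.single_eq_same]
    · rw [if_neg hj, Pi.single_eq_of_ne hj]
  have hminor : (F.updateRow L (Pi.single L (1:ℝ))).det
      = (Matrix.of fun i j : Fin (m+1) => (a i.castSucc - b j.castSucc)⁻¹).det := by
    rw [det_lastRowOne _ hrow]
    congr 1
    ext i j
    rw [Matrix.submatrix_apply,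
      Matrix.updateRow_ne (show (Fin.castSucc i) ≠ L from (Fin.castSucc_lt_last i).ne)]
    rfl
  set P := ∏ j : Fin (m+1), ∏ i ∈ Finset.Iio j,
    (a i.castSucc - a j.castSucc) * (b j.castSucc - b i.castSucc) with hP
  set Q := ∏ i : Fin (m+1), ∏ j : Fin (m+1), (a i.castSucc - b j.castSucc)⁻¹ with hQ
  have hMdet : (Matrix.of fun i j : Fin (m+1) => (a i.castSucc - b j.castSucc)⁻¹).det = P * Q :=
    cauchy_det (m+1) _ _ (fun i j => h i.castSucc j.castSucc)
  have hFdet : F.det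
      = (∏ j : Fin (m+2), ∏ i ∈ Finset.Iio j, (a i - a j) * (b j - b i)) *
        ∏ i : Fin (m+2), ∏ j : Fin (m+2), (a i - b j)⁻¹ := cauchy_det (m+2) a b h
  -- decompose the full products
  have hpair : (∏ j : Fin (m+2), ∏ i ∈ Finset.Iio j, (a i - a j) * (b j - b i))
      = P * ∏ i : Fin (m+1), (a i.castSucc - a L) * (b L - b i.castSucc) := by
    rw [Fin.prod_univ_castSucc, prod_Iio_last, hP, ← hLdef]
    congr 1
    exact Finset.prod_congr rfl fun j _ => prod_Iio_castSucc j _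
  have hinv : (∏ i : Fin (m+2), ∏ j : Fin (m+2), (a i - b j)⁻¹)
      = (Q * ∏ i : Fin (m+1), (a i.castSucc - b L)⁻¹) *
        ((∏ j : Fin (m+1), (a L - b j.castSucc)⁻¹) * (a L - b L)⁻¹) := by
    rw [Fin.prod_univ_castSucc, ← hLdef]
    congr 1
    · rw [hQ, ← Finset.prod_mul_distrib]
      exact Finset.prod_congr rfl fun i _ => by rw [Fin.prod_univ_castSucc]
    · rw [Fin.prod_univ_castSucc]
  rw [hminor, hMdet, hFdet, hpair, hinv]
  rw [prod_pairs fun i j => (a i.castSucc - a j.castSucc) * (b j.castSucc - b i.castSucc), ← hP]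
  have hQ1 : (∏ i : Fin (m+1), ∏ j : Fin (m+1), 1 / (a i.castSucc - b j.castSucc)) = Q := by
    rw [hQ]
    exact Finset.prod_congr rfl fun i _ => Finset.prod_congr rfl fun j _ => one_div _
  rw [hQ1]
  -- name the elementary products
  set X := ∏ i : Fin (m+1), (a i.castSucc - a L) * (b L - b i.castSucc) with hX
  set u := ∏ i : Fin (m+1), (a i.castSucc - b L) with hu
  set v := ∏ j : Fin (m+1), (a L - b j.castSucc) with hv
  have hu0 : u ≠ 0 := Finset.prod_ne_zero_iff.2 fun i _ => hne _ _
  have hv0 : v ≠ 0 := Finset.prod_ne_zero_iff.2 fun j _ => hne _ _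
  have hw0 : a L - b L ≠ 0 := hne _ _
  have huinv : (∏ i : Fin (m+1), (a i.castSucc - b L)⁻¹) = u⁻¹ := by
    rw [hu, ← Finset.prod_inv_distrib]
  have hvinv : (∏ j : Fin (m+1), (a L - b j.castSucc)⁻¹) = v⁻¹ := by
    rw [hv, ← Finset.prod_inv_distrib]
  have hM : (∏ i : Fin (m+1), ((a L - a i.castSucc) * (b i.castSucc - b L)) /
      ((a L - b i.castSucc) * (a i.castSucc - b L))) = X / (v * u) := by
    rw [Finset.prod_div_distrib, hX, hv, hu, ← Finset.prod_mul_distrib]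
    congr 1
    exact Finset.prod_congr rfl fun i _ => by ring
  rw [huinv, hvinv, hM]
  field_simp
  ring
end
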